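/- arXiv:1707.05886 — 4 statements merged into one kernel-verified Lean document; each statement's English description precedes it below -/
import Mathlib

section
/- Let (X, d) be a Ptolemaic metric space and let x₀ ∈ X be a fixed point. Define h_{x₀} on the one-point extension \bar{X} = X ∪ {∞} by h_{x₀}(x, y) = d(x, y) / (√(1 + d²(x, x₀)) · √(1 + d²(y, x₀))) for x, y ∈ X, h_{x₀}(x, ∞) = h_{x₀}(∞, x) = 1 / √(1 + d²(x₀, x)) for x ∈ X, and h_{x₀}(∞, ∞) = 0. Then h_{x₀} is a metric on \bar{X}: it is nonnegative, vanishes exactly on the diagonal, is symmetric, and satisfies the triangle inequality. -/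
private lemma sph_sq (t : ℝ) : Real.sqrt (1 + t ^ 2) ^ 2 = 1 + t ^ 2 :=
  Real.sq_sqrt (by positivity)

private lemma sph_pos (t : ℝ) : 0 < Real.sqrt (1 + t ^ 2) :=
  Real.sqrt_pos.2 (by positivity)

private lemma sph_key (a b c u v p A B C : ℝ)
    (ha : 0 ≤ a) (hb : 0 ≤ b) (hc : 0 ≤ c)
    (hu : 0 ≤ u) (hv : 0 ≤ v) (hp : 0 ≤ p)
    (hA : 0 < A) (hB : 0 < B) (hC : 0 < C)
    (hA2 : A ^ 2 = 1 + a ^ 2) (hB2 : B ^ 2 = 1 + b ^ 2) (hC2 : C ^ 2 = 1 + c ^ 2)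
    (h1 : p ≤ u + v) (h2 : b * p ≤ c * u + a * v) :
    B * p ≤ C * u + A * v := by
  have hCA : 1 + a * c ≤ C * A := by
    nlinarith [sq_nonneg (a - c), mul_pos hC hA, sq_nonneg (C * A - (1 + a * c))]
  have hC2u : C ^ 2 * u ^ 2 = (1 + c ^ 2) * u ^ 2 := by rw [hC2]
  have hA2v : A ^ 2 * v ^ 2 = (1 + a ^ 2) * v ^ 2 := by rw [hA2]
  have e1 : (u + v) ^ 2 + (c * u + a * v) ^ 2 ≤ (C * u + A * v) ^ 2 := by
    nlinarith [mul_nonneg (mul_nonneg hu hv) (by linarith : (0:ℝ) ≤ C * A - (1 + a * c)),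
      hC2u, hA2v]
  have e2 : p ^ 2 ≤ (u + v) ^ 2 := by nlinarith
  have e3 : (b * p) ^ 2 ≤ (c * u + a * v) ^ 2 :=
    pow_le_pow_left₀ (mul_nonneg hb hp) h2 2
  have hsq : (B * p) ^ 2 ≤ (C * u + A * v) ^ 2 := by nlinarith
  exact le_of_pow_le_pow_left₀ two_ne_zero (by positivity) hsq

private lemma sph_lip (a b u A B : ℝ) (ha : 0 ≤ a) (hb : 0 ≤ b) (hu : 0 ≤ u)
    (hA : 0 < A) (hB : 0 < B)
    (hA2 : A ^ 2 = 1 + a ^ 2) (hB2 : B ^ 2 = 1 + b ^ 2)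
    (h : b ≤ a + u) : B ≤ A + u := by
  have haA : a ≤ A := by nlinarith
  have : B ^ 2 ≤ (A + u) ^ 2 := by nlinarith
  exact le_of_pow_le_pow_left₀ two_ne_zero (by positivity) this

private lemma sph_le (t : ℝ) (ht : 0 ≤ t) : t ≤ Real.sqrt (1 + t ^ 2) := by
  nlinarith [sph_sq t, sph_pos t]


/-- The sphericalized distance `h_{x₀}` on the one-point extension
`X̄ = X ∪ {∞}`, modelled by `Option X` with `none = ∞`. -/
noncomputable def sphDist {X : Type*} [MetricSpace X] (x₀ : X) :
    Option X → Option X → ℝ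
  | some x, some y =>
      dist x y / (Real.sqrt (1 + dist x x₀ ^ 2) * Real.sqrt (1 + dist y x₀ ^ 2))
  | some x, none => 1 / Real.sqrt (1 + dist x₀ x ^ 2)
  | none, some y => 1 / Real.sqrt (1 + dist x₀ y ^ 2)
  | none, none => 0

/-- If `(X, d)` is a Ptolemaic metric space and `x₀ ∈ X`, then `h_{x₀}` is a
metric on `X̄ = X ∪ {∞}`: nonnegative, vanishing exactly on the diagonal,
symmetric, and satisfying the triangle inequality. -/
theorem sphDist_is_metric_of_ptolemaic {X : Type*} [MetricSpace X]
    (hpt : ∀ x y z t : X,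
      0 ≤ dist x z * dist y t + dist x t * dist y z - dist x y * dist z t)
    (x₀ : X) :
    (∀ a b : Option X, 0 ≤ sphDist x₀ a b) ∧
    (∀ a b : Option X, sphDist x₀ a b = 0 ↔ a = b) ∧
    (∀ a b : Option X, sphDist x₀ a b = sphDist x₀ b a) ∧
    (∀ a b c : Option X, sphDist x₀ a c ≤ sphDist x₀ a b + sphDist x₀ b c) := by
  refine ⟨?_, ?_, ?_, ?_⟩
  · rintro (_ | x) (_ | y) <;> simp only [sphDist] <;> positivity
  · rintro (_ | x) (_ | y)
    · simp [sphDist]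
    · simp [sphDist, (sph_pos (dist x₀ _)).ne']
    · simp [sphDist, (sph_pos (dist x₀ _)).ne']
    · simp [sphDist, div_eq_zero_iff, (mul_pos (sph_pos _) (sph_pos _)).ne',
        dist_eq_zero]
  · rintro (_ | x) (_ | y) <;> simp only [sphDist]
    rw [dist_comm, mul_comm]
  · rintro (_ | x) (_ | y) (_ | z) <;> simp only [sphDist]
    · -- ∞ ∞ ∞
      simp
    · -- ∞ ∞ z
      simp
    · -- ∞ y ∞
      positivity
    · -- ∞ y z
      rw [dist_comm x₀ y, dist_comm x₀ z]
      have hB := sph_pos (dist y x₀); have hC := sph_pos (dist z x₀)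
      have key : Real.sqrt (1 + dist y x₀ ^ 2) ≤
          Real.sqrt (1 + dist z x₀ ^ 2) + dist y z :=
        sph_lip (dist z x₀) (dist y x₀) (dist y z) _ _ dist_nonneg dist_nonneg
          dist_nonneg hC hB (sph_sq _) (sph_sq _)
          (by have := dist_triangle y z x₀; linarith [dist_comm y z ▸ this])
      rw [div_add_div _ _ hB.ne' (mul_pos hB hC).ne', div_le_div_iff₀ hC (by positivity)]
      nlinarith [mul_le_mul_of_nonneg_left key (mul_pos hB hC).le]
    · -- x ∞ ∞
      simp
    · -- x ∞ z
      rw [dist_comm x₀ x, dist_comm x₀ z]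
      have hA := sph_pos (dist x x₀); have hC := sph_pos (dist z x₀)
      have key : dist x z ≤ Real.sqrt (1 + dist x x₀ ^ 2) +
          Real.sqrt (1 + dist z x₀ ^ 2) := by
        have h1 : dist x z ≤ dist x x₀ + dist z x₀ := by
          rw [dist_comm z x₀]; exact dist_triangle x x₀ z
        have h2 := sph_le (dist x x₀) dist_nonneg
        have h3 := sph_le (dist z x₀) dist_nonneg
        linarith
      rw [div_add_div _ _ hA.ne' hC.ne', div_le_div_iff₀ (mul_pos hA hC) (by positivity)]
      nlinarith [mul_le_mul_of_nonneg_left key (mul_pos hA hC).le]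
    · -- x y ∞
      rw [dist_comm x₀ x, dist_comm x₀ y]
      have hA := sph_pos (dist x x₀); have hB := sph_pos (dist y x₀)
      have key : Real.sqrt (1 + dist y x₀ ^ 2) ≤
          dist x y + Real.sqrt (1 + dist x x₀ ^ 2) :=
        by have := sph_lip (dist x x₀) (dist y x₀) (dist x y) _ _ dist_nonneg
             dist_nonneg dist_nonneg hA hB (sph_sq _) (sph_sq _)
             (by have := dist_triangle y x x₀; rw [dist_comm y x] at this; linarith)
           linarith
      rw [div_add_div _ _ (mul_pos hA hB).ne' hB.ne', div_le_div_iff₀ hA (by positivity)]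
      nlinarith [mul_le_mul_of_nonneg_left key (mul_pos hA hB).le]
    · -- x y z
      have hA := sph_pos (dist x x₀); have hB := sph_pos (dist y x₀)
      have hC := sph_pos (dist z x₀)
      have hpt' : dist y x₀ * dist x z ≤
          dist z x₀ * dist x y + dist x x₀ * dist y z := by
        have h := hpt x z y x₀
        rw [dist_comm z y] at h
        nlinarith [h]
      have key := sph_key (dist x x₀) (dist y x₀) (dist z x₀)
        (dist x y) (dist y z) (dist x z) _ _ _
        dist_nonneg dist_nonneg dist_nonneg dist_nonneg dist_nonneg dist_nonneg
        hA hB hC (sph_sq _) (sph_sq _) (sph_sq _)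
        (dist_triangle x y z) (by nlinarith [hpt'])
      rw [div_add_div _ _ (mul_pos hA hB).ne' (mul_pos hB hC).ne',
        div_le_div_iff₀ (mul_pos hA hC) (by positivity)]
      nlinarith [mul_le_mul_of_nonneg_left key (mul_pos (mul_pos hA hB) hC).le]
end

section
/- Fix 0 < r₀ < 1 and let X = {z ∈ ℂ : |z| < r₀} be equipped with the hyperbolic distance \tilde{h} and with the hyperbolic area measure μ(S) = ∫_S 4/(1 − |z|²)² dm(z), where m is planar Lebesgue measure. Then (X, \tilde{h}, μ) is Ahlfors 2-regular: there exists a constant C ≥ 1 such that (1/C)·R² ≤ μ({z ∈ X : \tilde{h}(z, z₀) < R}) ≤ C·R² for every z₀ ∈ X and every 0 < R < diam_{\tilde{h}} X, where diam_{\tilde{h}} X is the diameter of X in the metric \tilde{h}. -/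
/-!
On `{‖z‖ ≤ r₀}` with `r₀ < 1` everything hyperbolic is Euclidean up to constants depending
on `r₀`. The identity `|1 - z w̄|² - |z - w|² = (1 - |z|²)(1 - |w|²)` keeps the
pseudo-hyperbolic distance `t = |z - w| / |1 - z w̄|` away from `1`, and
`t ≤ log ((1 + t) / (1 - t)) ≤ 2t / (1 - t)` then makes `h̃` bi-Lipschitz to `|z - w|`;
the area density `4 / (1 - |z|²)²` lies between `4` and `4 / (1 - r₀²)²`. Hence a
hyperbolic ball of radius `R` in `X` lies in the Euclidean disk of radius `2R` about `z₀`,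
and contains a Euclidean disk of radius comparable to `R`: its centre is pulled from `z₀`
towards `0` so that the disk stays inside `X`, which is possible because
`R < diam X ≤ 2 b r₀`, `b` being the Lipschitz constant.
-/

open MeasureTheory

/-- The hyperbolic distance in the unit disk:
`h̃(z₁, z₂) = log((1 + t)/(1 - t))` with `t = |z₁ - z₂| / |1 - z₁ * conj z₂|`. -/
noncomputable def hypDist (z₁ z₂ : ℂ) : ℝ :=
  Real.log ((1 + ‖z₁ - z₂‖ / ‖1 - z₁ * (starRingEnd ℂ) z₂‖) /
    (1 - ‖z₁ - z₂‖ / ‖1 - z₁ * (starRingEnd ℂ) z₂‖))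

/-- The hyperbolic area of a set `S ⊂ 𝔻`: `μ(S) = ∫_S 4/(1 - |z|²)² dm(z)`. -/
noncomputable def hypArea (S : Set ℂ) : ℝ :=
  ∫ z in S, 4 / (1 - ‖z‖ ^ 2) ^ 2

open Metric Real ComplexConjugate

section Distance

variable {z w : ℂ} {r t : ℝ}

lemma sq_norm_one_sub_mul_conj_sub_sq_norm_sub (z w : ℂ) :
    ‖1 - z * conj w‖ ^ 2 - ‖z - w‖ ^ 2 = (1 - ‖z‖ ^ 2) * (1 - ‖w‖ ^ 2) := by
  simp only [Complex.sq_norm, Complex.normSq_apply, Complex.sub_re, Complex.sub_im,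
    Complex.mul_re, Complex.mul_im, Complex.conj_re, Complex.conj_im, Complex.one_re,
    Complex.one_im]
  ring

lemma one_sub_mul_le_norm_one_sub_mul_conj (z w : ℂ) : 1 - ‖z‖ * ‖w‖ ≤ ‖1 - z * conj w‖ := by
  simpa using norm_sub_norm_le (1 : ℂ) (z * conj w)

lemma norm_one_sub_mul_conj_le (z w : ℂ) : ‖1 - z * conj w‖ ≤ 1 + ‖z‖ * ‖w‖ := by
  simpa using norm_sub_le (1 : ℂ) (z * conj w)

lemma norm_one_sub_mul_conj_le_two (hz : ‖z‖ ≤ 1) (hw : ‖w‖ ≤ 1) : ‖1 - z * conj w‖ ≤ 2 := by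
  linarith [norm_one_sub_mul_conj_le z w, mul_le_one₀ hz (norm_nonneg w) hw]

/-- The pseudo-hyperbolic distance `t` in the definition of `hypDist`. -/
noncomputable def pseudoHypDist (z w : ℂ) : ℝ := ‖z - w‖ / ‖1 - z * conj w‖

lemma hypDist_eq_log_pseudoHypDist (z w : ℂ) :
    hypDist z w = log ((1 + pseudoHypDist z w) / (1 - pseudoHypDist z w)) := rfl

lemma pseudoHypDist_nonneg (z w : ℂ) : 0 ≤ pseudoHypDist z w := by
  unfold pseudoHypDist; positivity

lemma norm_one_sub_mul_conj_pos (hz : ‖z‖ < 1) (hw : ‖w‖ < 1) : 0 < ‖1 - z * conj w‖ := by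
  have := one_sub_mul_le_norm_one_sub_mul_conj z w
  nlinarith [norm_nonneg z, norm_nonneg w]

lemma one_sub_sq_pseudoHypDist (hz : ‖z‖ < 1) (hw : ‖w‖ < 1) :
    1 - pseudoHypDist z w ^ 2 = (1 - ‖z‖ ^ 2) * (1 - ‖w‖ ^ 2) / ‖1 - z * conj w‖ ^ 2 := by
  have hA := norm_one_sub_mul_conj_pos hz hw
  rw [← sq_norm_one_sub_mul_conj_sub_sq_norm_sub, pseudoHypDist]
  field_simp

lemma pseudoHypDist_lt_one (hz : ‖z‖ < 1) (hw : ‖w‖ < 1) : pseudoHypDist z w < 1 := by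
  have hz' : 0 < 1 - ‖z‖ ^ 2 := by nlinarith [norm_nonneg z]
  have hw' : 0 < 1 - ‖w‖ ^ 2 := by nlinarith [norm_nonneg w]
  have hA := norm_one_sub_mul_conj_pos hz hw
  have hpos : 0 < 1 - pseudoHypDist z w ^ 2 := by
    rw [one_sub_sq_pseudoHypDist hz hw]; positivity
  nlinarith [pseudoHypDist_nonneg z w]

lemma norm_sub_div_two_le_pseudoHypDist (hz : ‖z‖ < 1) (hw : ‖w‖ < 1) :
    ‖z - w‖ / 2 ≤ pseudoHypDist z w :=
  div_le_div_of_nonneg_left (norm_nonneg _) (norm_one_sub_mul_conj_pos hz hw)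
    (norm_one_sub_mul_conj_le_two hz.le hw.le)

lemma pseudoHypDist_le (hz : ‖z‖ ≤ r) (hw : ‖w‖ ≤ r) (hr : r < 1) :
    pseudoHypDist z w ≤ ‖z - w‖ / (1 - r ^ 2) := by
  have hr0 : 0 ≤ r := (norm_nonneg z).trans hz
  have hzw : ‖z‖ * ‖w‖ ≤ r ^ 2 := by
    rw [sq]; exact mul_le_mul hz hw (norm_nonneg w) hr0
  have := one_sub_mul_le_norm_one_sub_mul_conj z w
  exact div_le_div_of_nonneg_left (norm_nonneg _) (by nlinarith) (by linarith)

lemma sq_one_sub_sq_div_eight_le_one_sub_pseudoHypDist (hz : ‖z‖ ≤ r) (hw : ‖w‖ ≤ r)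
    (hr : r < 1) : (1 - r ^ 2) ^ 2 / 8 ≤ 1 - pseudoHypDist z w := by
  have hr0 : 0 ≤ r := (norm_nonneg z).trans hz
  have hz1 : ‖z‖ < 1 := hz.trans_lt hr
  have hw1 : ‖w‖ < 1 := hw.trans_lt hr
  have hA := norm_one_sub_mul_conj_pos hz1 hw1
  have hA2 : ‖1 - z * conj w‖ ^ 2 ≤ 2 ^ 2 :=
    pow_le_pow_left₀ hA.le (norm_one_sub_mul_conj_le_two hz1.le hw1.le) 2
  have he : 0 ≤ 1 - r ^ 2 := by nlinarith
  have hzr : 1 - r ^ 2 ≤ 1 - ‖z‖ ^ 2 := by nlinarith [norm_nonneg z]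
  have hwr : 1 - r ^ 2 ≤ 1 - ‖w‖ ^ 2 := by nlinarith [norm_nonneg w]
  have hsq : (1 - r ^ 2) ^ 2 / 2 ^ 2 ≤ 1 - pseudoHypDist z w ^ 2 := by
    rw [one_sub_sq_pseudoHypDist hz1 hw1]
    calc (1 - r ^ 2) ^ 2 / 2 ^ 2 ≤ (1 - ‖z‖ ^ 2) * (1 - ‖w‖ ^ 2) / 2 ^ 2 := by
          rw [sq (1 - r ^ 2)]; gcongr; exact he.trans hzr
      _ ≤ _ := div_le_div_of_nonneg_left (mul_nonneg (he.trans hzr) (he.trans hwr))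
          (by positivity) hA2
  nlinarith [pseudoHypDist_nonneg z w, pseudoHypDist_lt_one hz1 hw1]

lemma le_log_one_add_div_one_sub (ht₀ : 0 ≤ t) (ht₁ : t < 1) :
    t ≤ log ((1 + t) / (1 - t)) := by
  have : 1 - t ≠ 0 := (sub_pos.2 ht₁).ne'
  calc t ≤ 2 * t / (1 + t) := by rw [le_div_iff₀ (by linarith)]; nlinarith
    _ = 1 - ((1 + t) / (1 - t))⁻¹ := by field_simp; ring
    _ ≤ _ := one_sub_inv_le_log_of_pos (div_pos (by linarith) (by linarith))

lemma log_one_add_div_one_sub_le (ht₀ : -1 < t) (ht₁ : t < 1) :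
    log ((1 + t) / (1 - t)) ≤ 2 * t / (1 - t) := by
  have : 1 - t ≠ 0 := (sub_pos.2 ht₁).ne'
  calc log ((1 + t) / (1 - t)) ≤ (1 + t) / (1 - t) - 1 :=
        log_le_sub_one_of_pos (div_pos (by linarith) (by linarith))
    _ = 2 * t / (1 - t) := by field_simp; ring

lemma norm_sub_le_two_mul_hypDist (hz : ‖z‖ < 1) (hw : ‖w‖ < 1) :
    ‖z - w‖ ≤ 2 * hypDist z w := by
  rw [hypDist_eq_log_pseudoHypDist]
  have := norm_sub_div_two_le_pseudoHypDist hz hw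
  have := le_log_one_add_div_one_sub (pseudoHypDist_nonneg z w) (pseudoHypDist_lt_one hz hw)
  linarith

lemma hypDist_le_mul_norm_sub (hz : ‖z‖ ≤ r) (hw : ‖w‖ ≤ r) (hr : r < 1) :
    hypDist z w ≤ 16 / (1 - r ^ 2) ^ 3 * ‖z - w‖ := by
  have hr0 : 0 ≤ r := (norm_nonneg z).trans hz
  have he : 0 < 1 - r ^ 2 := by nlinarith
  set t := pseudoHypDist z w
  have ht₀ : 0 ≤ t := pseudoHypDist_nonneg z w
  have h1t : (1 - r ^ 2) ^ 2 / 8 ≤ 1 - t :=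
    sq_one_sub_sq_div_eight_le_one_sub_pseudoHypDist hz hw hr
  have ht₁ : t < 1 := by linarith [show 0 < (1 - r ^ 2) ^ 2 / 8 by positivity]
  rw [hypDist_eq_log_pseudoHypDist]
  calc log ((1 + t) / (1 - t)) ≤ 2 * t / (1 - t) :=
        log_one_add_div_one_sub_le (by linarith) ht₁
    _ ≤ 2 * (‖z - w‖ / (1 - r ^ 2)) / ((1 - r ^ 2) ^ 2 / 8) := by
        gcongr
        exact pseudoHypDist_le hz hw hr
    _ = 16 / (1 - r ^ 2) ^ 3 * ‖z - w‖ := by field_simp; ring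

end Distance

section Area

noncomputable def hypDensity (z : ℂ) : ℝ := 4 / (1 - ‖z‖ ^ 2) ^ 2

lemma measurable_hypDensity : Measurable hypDensity := by
  unfold hypDensity; fun_prop

variable {z : ℂ} {r : ℝ} {S : Set ℂ}

lemma four_le_hypDensity (hz : ‖z‖ < 1) : 4 ≤ hypDensity z := by
  have h₀ : 0 < 1 - ‖z‖ ^ 2 := by nlinarith [norm_nonneg z]
  have h₁ : (1 - ‖z‖ ^ 2) ^ 2 ≤ 1 := by nlinarith [norm_nonneg z]
  rw [hypDensity, le_div_iff₀ (by positivity)]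
  linarith

lemma norm_hypDensity_le (hz : ‖z‖ ≤ r) (hr : r < 1) :
    ‖hypDensity z‖ ≤ 4 / (1 - r ^ 2) ^ 2 := by
  have hr₀ : 0 ≤ r := (norm_nonneg z).trans hz
  have he : 0 < 1 - r ^ 2 := by nlinarith
  rw [Real.norm_of_nonneg (by linarith [four_le_hypDensity (hz.trans_lt hr)]), hypDensity]
  gcongr

lemma integrableOn_hypDensity (hS : S ⊆ closedBall 0 r) (hr : r < 1) :
    IntegrableOn hypDensity S :=
  (Measure.integrableOn_of_bounded measure_closedBall_lt_top.ne
    measurable_hypDensity.aestronglyMeasurable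
    (ae_restrict_of_forall_mem measurableSet_closedBall fun _ hz =>
      norm_hypDensity_le (mem_closedBall_zero_iff.1 hz) hr)).mono_set hS

lemma hypArea_le_mul_volume_real (hS : S ⊆ closedBall 0 r) (hr : r < 1) :
    hypArea S ≤ 4 / (1 - r ^ 2) ^ 2 * volume.real S :=
  (Real.le_norm_self _).trans <| norm_setIntegral_le_of_norm_le_const
    ((measure_mono hS).trans_lt measure_closedBall_lt_top)
    fun _ hz => norm_hypDensity_le (mem_closedBall_zero_iff.1 (hS hz)) hr

lemma four_mul_volume_real_le_hypArea (hS : MeasurableSet S) (hSr : S ⊆ closedBall 0 r)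
    (hr : r < 1) : 4 * volume.real S ≤ hypArea S :=
  setIntegral_ge_of_const_le_real hS ((measure_mono hSr).trans_lt measure_closedBall_lt_top).ne
    (fun _ hz => four_le_hypDensity ((mem_closedBall_zero_iff.1 (hSr hz)).trans_lt hr))
    (integrableOn_hypDensity hSr hr)

end Area

lemma Complex.volume_real_ball (a : ℂ) {r : ℝ} (hr : 0 ≤ r) :
    volume.real (ball a r) = π * r ^ 2 := by
  simp [measureReal_def, Complex.volume_ball, ENNReal.toReal_ofReal hr, mul_comm]

lemma exists_ball_subset_ball_zero_inter_ball {E : Type*} [NormedAddCommGroup E]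
    [NormedSpace ℝ E] {x : E} {r ρ : ℝ} (hx : ‖x‖ < r) (hρ : 0 ≤ ρ) (hρr : ρ ≤ 2 * r) :
    ∃ y, ball y (ρ / 2) ⊆ ball 0 r ∩ ball x ρ := by
  have hr : 0 < r := (norm_nonneg x).trans_lt hx
  set c := ρ / (2 * r) with hc
  have hc₀ : 0 ≤ c := by positivity
  have hc₁ : c ≤ 1 := (div_le_one (by positivity)).2 hρr
  have hcr : c * r = ρ / 2 := by rw [hc]; field_simp
  refine ⟨(1 - c) • x, fun z hz => ⟨?_, ?_⟩⟩
  · have : ‖(1 - c) • x‖ ≤ (1 - c) * r := by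
      rw [norm_smul, Real.norm_of_nonneg (by linarith)]
      exact mul_le_mul_of_nonneg_left hx.le (by linarith)
    rw [mem_ball_zero_iff]
    linarith [norm_le_norm_add_norm_sub' z ((1 - c) • x), mem_ball_iff_norm.1 hz]
  · have : ‖(1 - c) • x - x‖ ≤ c * r := by
      rw [show (1 - c) • x - x = -(c • x) by module, norm_neg, norm_smul,
        Real.norm_of_nonneg hc₀]
      exact mul_le_mul_of_nonneg_left hx.le hc₀
    rw [mem_ball_iff_norm]
    linarith [norm_sub_le_norm_sub_add_norm_sub z ((1 - c) • x) x, mem_ball_iff_norm.1 hz]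

def hypBall (r₀ : ℝ) (z₀ : ℂ) (R : ℝ) : Set ℂ := {z | ‖z‖ < r₀ ∧ hypDist z z₀ < R}

section HypBall

variable {r₀ R : ℝ} {z₀ : ℂ}

lemma measurableSet_hypBall : MeasurableSet (hypBall r₀ z₀ R) := by
  have : Measurable (hypDist · z₀) := by unfold hypDist; fun_prop
  exact (measurableSet_lt measurable_norm measurable_const).inter
    (measurableSet_lt this measurable_const)

lemma hypBall_subset_closedBall (r₀ : ℝ) (z₀ : ℂ) (R : ℝ) :
    hypBall r₀ z₀ R ⊆ closedBall 0 r₀ :=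
  fun _ hz => mem_closedBall_zero_iff.2 hz.1.le

lemma hypBall_subset_ball (hr₀ : r₀ ≤ 1) (hz₀ : ‖z₀‖ < 1) :
    hypBall r₀ z₀ R ⊆ ball z₀ (2 * R) := fun z hz => by
  rw [mem_ball_iff_norm]
  linarith [norm_sub_le_two_mul_hypDist (hz.1.trans_le hr₀) hz₀, hz.2]

lemma ball_zero_inter_ball_subset_hypBall (hr₀ : r₀ < 1) (hz₀ : ‖z₀‖ < r₀) :
    ball 0 r₀ ∩ ball z₀ (R / (16 / (1 - r₀ ^ 2) ^ 3)) ⊆ hypBall r₀ z₀ R := by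
  have he : 0 < 1 - r₀ ^ 2 := by nlinarith [norm_nonneg z₀]
  rintro z ⟨hz, hzz₀⟩
  rw [mem_ball_zero_iff] at hz
  rw [mem_ball_iff_norm, lt_div_iff₀' (by positivity)] at hzz₀
  exact ⟨hz, (hypDist_le_mul_norm_sub hz.le hz₀.le hr₀).trans_lt hzz₀⟩

lemma hypArea_hypBall_le (hr₀ : r₀ < 1) (hz₀ : ‖z₀‖ < 1) (hR : 0 ≤ R) :
    hypArea (hypBall r₀ z₀ R) ≤ 16 * π / (1 - r₀ ^ 2) ^ 2 * R ^ 2 := by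
  calc hypArea (hypBall r₀ z₀ R)
      ≤ 4 / (1 - r₀ ^ 2) ^ 2 * volume.real (hypBall r₀ z₀ R) :=
        hypArea_le_mul_volume_real (hypBall_subset_closedBall r₀ z₀ R) hr₀
    _ ≤ 4 / (1 - r₀ ^ 2) ^ 2 * volume.real (ball z₀ (2 * R)) := by
        gcongr
        · exact measure_ball_lt_top.ne
        · exact hypBall_subset_ball hr₀.le hz₀
    _ = 16 * π / (1 - r₀ ^ 2) ^ 2 * R ^ 2 := by
        rw [Complex.volume_real_ball _ (by positivity)]; ring

lemma le_hypArea_hypBall (hr₀ : r₀ < 1) (hz₀ : ‖z₀‖ < r₀) (hR : 0 ≤ R)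
    (hRr₀ : R ≤ 2 * (16 / (1 - r₀ ^ 2) ^ 3) * r₀) :
    π / (4 * (16 / (1 - r₀ ^ 2) ^ 3) ^ 2) * R ^ 2 ≤ hypArea (hypBall r₀ z₀ R) := by
  have he : 0 < 1 - r₀ ^ 2 := by nlinarith [norm_nonneg z₀]
  set b := 16 / (1 - r₀ ^ 2) ^ 3
  have hb : 0 < b := by positivity
  have hr₀0 : 0 < r₀ := (norm_nonneg z₀).trans_lt hz₀
  set ρ := min (R / b) r₀
  have hρ : R / (2 * b) ≤ ρ := le_min
    (div_le_div_of_nonneg_left hR hb (by linarith))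
    ((div_le_iff₀ (by positivity)).2 (by linarith))
  have hρ₀ : 0 ≤ ρ := (div_nonneg hR (by positivity)).trans hρ
  obtain ⟨y, hy⟩ := exists_ball_subset_ball_zero_inter_ball hz₀ hρ₀
    (by linarith [min_le_right (R / b) r₀])
  have hsub : ball y (ρ / 2) ⊆ hypBall r₀ z₀ R :=
    hy.trans ((Set.inter_subset_inter_right _ (ball_subset_ball (min_le_left _ _))).trans
      (ball_zero_inter_ball_subset_hypBall hr₀ hz₀))
  calc π / (4 * b ^ 2) * R ^ 2 = π * (R / (2 * b)) ^ 2 := by field_simp; ring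
    _ ≤ π * ρ ^ 2 := by gcongr
    _ = 4 * volume.real (ball y (ρ / 2)) := by
        rw [Complex.volume_real_ball _ (by positivity)]; ring
    _ ≤ 4 * volume.real (hypBall r₀ z₀ R) := by
        gcongr
        · exact ((measure_mono (hypBall_subset_closedBall r₀ z₀ R)).trans_lt
            measure_closedBall_lt_top).ne
    _ ≤ hypArea (hypBall r₀ z₀ R) :=
        four_mul_volume_real_le_hypArea measurableSet_hypBall
          (hypBall_subset_closedBall r₀ z₀ R) hr₀

lemma sSup_hypDist_le (hr₀ : 0 ≤ r₀) (hr₀' : r₀ < 1) :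
    sSup {s : ℝ | ∃ z w : ℂ, ‖z‖ < r₀ ∧ ‖w‖ < r₀ ∧ s = hypDist z w}
      ≤ 2 * (16 / (1 - r₀ ^ 2) ^ 3) * r₀ := by
  have he : 0 < 1 - r₀ ^ 2 := by nlinarith
  refine Real.sSup_le ?_ (by positivity)
  rintro s ⟨z, w, hz, hw, rfl⟩
  calc hypDist z w ≤ 16 / (1 - r₀ ^ 2) ^ 3 * ‖z - w‖ := hypDist_le_mul_norm_sub hz.le hw.le hr₀'
    _ ≤ 16 / (1 - r₀ ^ 2) ^ 3 * (2 * r₀) := by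
        gcongr
        linarith [norm_sub_le z w]
    _ = 2 * (16 / (1 - r₀ ^ 2) ^ 3) * r₀ := by ring

end HypBall

/-- The disk `X = {|z| < r₀}` (with `0 < r₀ < 1`), endowed with the hyperbolic
distance `h̃` and the hyperbolic area measure, is Ahlfors `2`-regular: there
is `C ≥ 1` with `(1/C)·R² ≤ μ(B_{h̃}(z₀, R)) ≤ C·R²` for every `z₀ ∈ X` and
every `0 < R < diam_{h̃} X`. -/
theorem hyperbolic_disk_ahlfors_two_regular (r₀ : ℝ) (hr₀ : 0 < r₀) (hr₀' : r₀ < 1) :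
    ∃ C : ℝ, 1 ≤ C ∧ ∀ z₀ : ℂ, ‖z₀‖ < r₀ → ∀ R : ℝ, 0 < R →
      R < sSup {s : ℝ | ∃ z w : ℂ, ‖z‖ < r₀ ∧ ‖w‖ < r₀ ∧
        s = hypDist z w} →
      (1 / C) * R ^ 2 ≤ hypArea {z : ℂ | ‖z‖ < r₀ ∧ hypDist z z₀ < R} ∧
      hypArea {z : ℂ | ‖z‖ < r₀ ∧ hypDist z z₀ < R} ≤ C * R ^ 2 := by
  have he : 0 < 1 - r₀ ^ 2 := by nlinarith
  have he₁ : (1 - r₀ ^ 2) ^ 2 ≤ 1 := by nlinarith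
  set b := 16 / (1 - r₀ ^ 2) ^ 3
  refine ⟨16 * π / (1 - r₀ ^ 2) ^ 2 + 4 * b ^ 2 / π, ?_, fun z₀ hz₀ R hR hRd => ⟨?_, ?_⟩⟩
  · refine le_add_of_le_of_nonneg ?_ (by positivity)
    rw [le_div_iff₀ (by positivity)]
    nlinarith [pi_gt_three]
  · have hC : 1 / (16 * π / (1 - r₀ ^ 2) ^ 2 + 4 * b ^ 2 / π) ≤ π / (4 * b ^ 2) := by
      rw [one_div, inv_le_comm₀ (by positivity) (by positivity), inv_div]
      exact le_add_of_nonneg_left (by positivity)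
    calc 1 / (16 * π / (1 - r₀ ^ 2) ^ 2 + 4 * b ^ 2 / π) * R ^ 2
        ≤ π / (4 * b ^ 2) * R ^ 2 := by gcongr
      _ ≤ _ := le_hypArea_hypBall hr₀' hz₀ hR.le (hRd.le.trans (sSup_hypDist_le hr₀.le hr₀'))
  · refine (hypArea_hypBall_le hr₀' (hz₀.trans hr₀') hR.le).trans ?_
    gcongr
    exact le_add_of_nonneg_right (by positivity)
end

section
/- Let n ≥ 2 and for each integer m ≥ 2 define g_m on the open unit ball 𝔹ⁿ = {x ∈ ℝⁿ : |x| < 1} by g_m(x) = x / (c_m · log(e/c_m)) for |x| < c_m, and g_m(x) = x / (|x| · log(e/|x|)) for c_m ≤ |x| < 1, where c_m = (m − 1)/m. Then the family {g_m}_{m=2}^{∞} is equicontinuous at the point 0: for every ε > 0 there is δ > 0 such that |g_m(x) − g_m(0)| < ε for every m ≥ 2 and every x ∈ 𝔹ⁿ with |x| < δ. -/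
/-- Let `n ≥ 2` and for `m ≥ 2` let `g_m : 𝔹ⁿ → ℝⁿ` be given by
`g_m(x) = x/(c_m·log(e/c_m))` for `|x| < c_m` and
`g_m(x) = x/(|x|·log(e/|x|))` for `c_m ≤ |x| < 1`, where `c_m = (m-1)/m`.
Then the family `{g_m}_{m ≥ 2}` is equicontinuous at `0`. -/
theorem g_m_equicontinuous_at_zero (n : ℕ) (hn : 2 ≤ n)
    (g : ℕ → EuclideanSpace ℝ (Fin n) → EuclideanSpace ℝ (Fin n))
    (hg1 : ∀ m : ℕ, 2 ≤ m → ∀ x : EuclideanSpace ℝ (Fin n),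
      ‖x‖ < ((m : ℝ) - 1) / m →
      g m x = (1 / ((((m : ℝ) - 1) / m) *
        Real.log (Real.exp 1 / (((m : ℝ) - 1) / m)))) • x)
    (hg2 : ∀ m : ℕ, 2 ≤ m → ∀ x : EuclideanSpace ℝ (Fin n),
      ((m : ℝ) - 1) / m ≤ ‖x‖ → ‖x‖ < 1 →
      g m x = (1 / (‖x‖ * Real.log (Real.exp 1 / ‖x‖))) • x) :
    ∀ ε : ℝ, 0 < ε → ∃ δ : ℝ, 0 < δ ∧ ∀ m : ℕ, 2 ≤ m →
      ∀ x : EuclideanSpace ℝ (Fin n), ‖x‖ < 1 → ‖x‖ < δ →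
        ‖g m x - g m 0‖ < ε := by
  intro ε hε
  refine ⟨min (1/2) (ε/2), lt_min (by norm_num) (by linarith), ?_⟩
  intro m hm x hx1 hxδ
  set c : ℝ := ((m : ℝ) - 1) / m with hc
  have hm2 : (2 : ℝ) ≤ (m : ℝ) := by exact_mod_cast hm
  have hmpos : (0 : ℝ) < (m : ℝ) := by linarith
  have hchalf : (1/2 : ℝ) ≤ c := by
    rw [hc, le_div_iff₀ hmpos]; linarith
  have hcpos : 0 < c := by linarith
  have hc1 : c < 1 := by
    rw [hc, div_lt_one hmpos]; linarith
  -- log(e/c) > 1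
  have hL : 1 < Real.log (Real.exp 1 / c) := by
    have : Real.exp 1 < Real.exp 1 / c := by
      rw [lt_div_iff₀ hcpos]
      nlinarith [Real.exp_pos 1]
    calc (1 : ℝ) = Real.log (Real.exp 1) := (Real.log_exp 1).symm
      _ < Real.log (Real.exp 1 / c) := Real.log_lt_log (Real.exp_pos 1) this
  have hcL : (1/2 : ℝ) < c * Real.log (Real.exp 1 / c) := by nlinarith
  have hcLpos : 0 < c * Real.log (Real.exp 1 / c) := by linarith
  -- g m 0 = 0
  have h0 : g m 0 = 0 := by
    have := hg1 m hm 0 (by simpa using hcpos)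
    simpa using this
  have hxc : ‖x‖ < c := lt_of_lt_of_le hxδ (le_trans (min_le_left _ _) hchalf)
  have hgx := hg1 m hm x hxc
  rw [h0, sub_zero, hgx, norm_smul]
  have h2 : |1 / (c * Real.log (Real.exp 1 / c))| ≤ 2 := by
    rw [abs_of_pos (by positivity)]
    rw [div_le_iff₀ hcLpos]; linarith
  have hxε : ‖x‖ < ε / 2 := lt_of_lt_of_le hxδ (min_le_right _ _)
  calc |1 / (c * Real.log (Real.exp 1 / c))| * ‖x‖
      ≤ 2 * ‖x‖ := by
        apply mul_le_mul_of_nonneg_right h2 (norm_nonneg x)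
    _ < 2 * (ε / 2) := by
        apply mul_lt_mul_of_pos_left hxε (by norm_num)
    _ = ε := by ring
end

section
/- Let n ≥ 2 and let α > 0 satisfy α·(n − 1) < n. Then the function Q : ℝⁿ \ {0} → ℝ defined by Q(x) = ((1 + |x|^α)/(α·|x|^α))^{n−1} is locally integrable with respect to Lebesgue measure near 0, but Q does not have finite mean oscillation at the point 0; that is, limsup_{ε → 0} (1/m(B(0, ε))) ∫_{B(0, ε)} |Q(x) − \bar{Q}_ε| dm(x) = ∞, where m is Lebesgue measure on ℝⁿ, B(0, ε) = {x ∈ ℝⁿ : |x| < ε}, and \bar{Q}_ε = (1/m(B(0, ε))) ∫_{B(0, ε)} Q(x) dm(x). -/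
open MeasureTheory Filter Metric Set Real Module
open scoped Topology ENNReal

/-!
Off the origin `Q x = q ‖x‖` with `q r = (α⁻¹ (1 + r ^ (-α))) ^ (n - 1)`. Near `0` this is
at most `C ‖x‖ ^ (-α (n - 1))`, which is integrable because `α (n - 1) < n`. Since `q` is
decreasing, on `B(0, ε)` we have `Q ≥ q (ε/4)` on `B(0, ε/4)` and `Q ≤ q (ε/2)` on a ball of the
same volume inside the annulus `ε/2 < ‖x‖ < ε`. Whatever the mean of `Q` is, it is at distance at
least `(q (ε/4) - q (ε/2)) / 2` from `Q` on one of these two balls, so the mean oscillation is at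
least `4⁻ⁿ (q (ε/4) - q (ε/2)) / 2 ≥ c ε ^ (-α (n - 1))`, which tends to infinity.
-/

noncomputable def meanOscillation {X : Type*} [MeasurableSpace X] (μ : Measure X) (f : X → ℝ)
    (s : Set X) : ℝ :=
  (μ.real s)⁻¹ * ∫ x in s, |f x - (μ.real s)⁻¹ * ∫ y in s, f y ∂μ| ∂μ

section MeanOscillation

variable {X : Type*} [MeasurableSpace X] {μ : Measure X} {f : X → ℝ} {s S T : Set X}
  {a b : ℝ}

theorem mul_min_measureReal_le_setIntegral_abs_sub (hs : μ s ≠ ∞) (hf : IntegrableOn f s μ)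
    (hSs : S ⊆ s) (hTs : T ⊆ s) (hfS : ∀ᵐ x ∂μ.restrict S, a ≤ f x)
    (hfT : ∀ᵐ x ∂μ.restrict T, f x ≤ b) (hba : b ≤ a) (c : ℝ) :
    (a - b) / 2 * min (μ.real S) (μ.real T) ≤ ∫ x in s, |f x - c| ∂μ := by
  have hint : IntegrableOn (fun x => |f x - c|) s μ := (hf.sub (integrableOn_const hs)).abs
  have hgap : ∀ U ⊆ s, (∀ᵐ x ∂μ.restrict U, (a - b) / 2 ≤ |f x - c|) →
      (a - b) / 2 * μ.real U ≤ ∫ x in s, |f x - c| ∂μ := by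
    intro U hU hfU
    calc (a - b) / 2 * μ.real U = ∫ _ in U, (a - b) / 2 ∂μ := by
          rw [setIntegral_const, smul_eq_mul, mul_comm]
      _ ≤ ∫ x in U, |f x - c| ∂μ :=
          setIntegral_mono_ae_restrict
            (integrableOn_const ((measure_mono hU).trans_lt hs.lt_top).ne) (hint.mono_set hU) hfU
      _ ≤ ∫ x in s, |f x - c| ∂μ :=
          setIntegral_mono_set hint (ae_of_all _ fun _ => abs_nonneg _) hU.eventuallyLE
  have hab : 0 ≤ (a - b) / 2 := by linarith
  -- `c` lies at distance at least `(a - b) / 2` below `f` on `S` or above `f` on `T`.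
  rcases le_total c ((a + b) / 2) with hc | hc
  · refine (mul_le_mul_of_nonneg_left (min_le_left _ _) hab).trans (hgap S hSs ?_)
    filter_upwards [hfS] with x hx
    exact le_abs.2 (Or.inl (by linarith))
  · refine (mul_le_mul_of_nonneg_left (min_le_right _ _) hab).trans (hgap T hTs ?_)
    filter_upwards [hfT] with x hx
    exact le_abs.2 (Or.inr (by linarith))

end MeanOscillation

section Radial

variable {E : Type*} [NormedAddCommGroup E] [NormedSpace ℝ E] [FiniteDimensional ℝ E]
  [Nontrivial E] [MeasurableSpace E] [BorelSpace E] {μ : Measure E} [μ.IsAddHaarMeasure]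
  {f : E → ℝ} {q : ℝ → ℝ} {r : ℝ}

theorem sub_div_le_meanOscillation_ball_of_antitoneOn (hq : AntitoneOn q (Ioi 0))
    (hf : ∀ x ≠ 0, f x = q ‖x‖) (hint : IntegrableOn f (ball 0 r) μ) (hr : 0 < r) :
    (q (r / 4) - q (r / 2)) / (2 * 4 ^ finrank ℝ E) ≤ meanOscillation μ f (ball 0 r) := by
  -- `B(x₀, r/4)` lies in the annulus `r/2 < ‖x‖ < r` and has the volume of `B(0, r/4)`.
  obtain ⟨x₀, hx₀⟩ := exists_norm_eq E (by positivity : 0 ≤ 3 * (r / 4))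
  have hS : ball (0 : E) (r / 4) ⊆ ball 0 r := ball_subset_ball (by linarith)
  have hT : ball x₀ (r / 4) ⊆ ball 0 r := by
    intro y hy
    rw [mem_ball, dist_eq_norm] at hy
    rw [mem_ball_zero_iff]
    linarith [norm_le_norm_sub_add y x₀]
  have hfS : ∀ᵐ x ∂μ.restrict (ball 0 (r / 4)), q (r / 4) ≤ f x := by
    filter_upwards [ae_restrict_mem measurableSet_ball, ae_restrict_of_ae (μ.ae_ne 0)]
      with x hx hx0
    rw [hf x hx0]
    exact hq (norm_pos_iff.2 hx0) (mem_Ioi.2 (by positivity)) (mem_ball_zero_iff.1 hx).le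
  have hfT : ∀ᵐ x ∂μ.restrict (ball x₀ (r / 4)), f x ≤ q (r / 2) := by
    filter_upwards [ae_restrict_mem measurableSet_ball] with x hx
    rw [mem_ball, dist_eq_norm] at hx
    have hx2 : r / 2 ≤ ‖x‖ := by linarith [norm_sub_norm_le x₀ x, norm_sub_rev x x₀]
    have hx0 : 0 < ‖x‖ := by linarith
    rw [hf x (norm_pos_iff.1 hx0)]
    exact hq (mem_Ioi.2 (by positivity)) hx0 hx2
  have key := mul_min_measureReal_le_setIntegral_abs_sub measure_ball_lt_top.ne hint hS hT hfS hfT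
    (hq (mem_Ioi.2 (by positivity)) (mem_Ioi.2 (by positivity)) (by linarith))
    ((μ.real (ball 0 r))⁻¹ * ∫ y in ball 0 r, f y ∂μ)
  rw [Measure.addHaar_real_ball_center μ x₀, min_self] at key
  have hvol : μ.real (ball 0 r) = 4 ^ finrank ℝ E * μ.real (ball 0 (r / 4)) := by
    have := Measure.addHaar_ball_mul_of_pos μ 0 (by norm_num : (0 : ℝ) < 4) (r / 4)
    rw [mul_div_cancel₀ r (by norm_num : (4 : ℝ) ≠ 0)] at this
    simp [measureReal_def, this]
  have hpos : 0 < μ.real (ball (0 : E) (r / 4)) :=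
    ENNReal.toReal_pos (measure_ball_pos μ 0 (by positivity)).ne' measure_ball_lt_top.ne
  calc (q (r / 4) - q (r / 2)) / (2 * 4 ^ finrank ℝ E)
      = (μ.real (ball 0 r))⁻¹ * ((q (r / 4) - q (r / 2)) / 2 * μ.real (ball 0 (r / 4))) := by
        rw [hvol]; field_simp
    _ ≤ meanOscillation μ f (ball 0 r) :=
        mul_le_mul_of_nonneg_left key (inv_nonneg.2 measureReal_nonneg)

end Radial

noncomputable def radialProfile (α : ℝ) (k : ℕ) (r : ℝ) : ℝ :=
  ((1 + r ^ α) / (α * r ^ α)) ^ k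

section RadialProfile

variable {α r : ℝ} {k : ℕ}

theorem radialProfile_eq (hr : 0 < r) : radialProfile α k r = (α⁻¹ * (1 + r ^ (-α))) ^ k := by
  rw [radialProfile, rpow_neg hr.le]
  field_simp
  ring

theorem radialProfile_nonneg (hα : 0 ≤ α) (hr : 0 ≤ r) : 0 ≤ radialProfile α k r :=
  pow_nonneg (div_nonneg (by positivity) (mul_nonneg hα (by positivity))) k

theorem antitoneOn_radialProfile (hα : 0 ≤ α) : AntitoneOn (radialProfile α k) (Ioi 0) := by
  intro r (hr : 0 < r) s (hs : 0 < s) hrs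
  rw [radialProfile_eq hr, radialProfile_eq hs]
  have : s ^ (-α) ≤ r ^ (-α) := rpow_le_rpow_of_nonpos hr hrs (neg_nonpos.2 hα)
  exact pow_le_pow_left₀ (mul_nonneg (inv_nonneg.2 hα) (by positivity)) (by gcongr) k

theorem radialProfile_le (hα : 0 < α) (hr : 0 < r) (hr1 : r ≤ 1) :
    radialProfile α k r ≤ (2 / α) ^ k * r ^ (-(α * k)) := by
  have hone : 1 ≤ r ^ (-α) := one_le_rpow_of_pos_of_le_one_of_nonpos hr hr1 (by linarith)
  calc radialProfile α k r = (α⁻¹ * (1 + r ^ (-α))) ^ k := radialProfile_eq hr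
    _ ≤ (2 / α * r ^ (-α)) ^ k := by
        rw [div_eq_inv_mul, mul_assoc]
        gcongr
        linarith
    _ = (2 / α) ^ k * r ^ (-(α * k)) := by
        rw [mul_pow, ← rpow_natCast (r ^ (-α)), ← rpow_mul hr.le, neg_mul]

theorem pow_le_radialProfile_div_four_sub (hα : 0 ≤ α) (hk : k ≠ 0) (hr : 0 < r) :
    (α⁻¹ * (4 ^ α - 2 ^ α) * r ^ (-α)) ^ k ≤
      radialProfile α k (r / 4) - radialProfile α k (r / 2) := by
  have hscale : ∀ c : ℝ, 0 < c → (r / c) ^ (-α) = c ^ α * r ^ (-α) := fun c hc => by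
    rw [div_rpow hr.le hc.le, rpow_neg hc.le, div_inv_eq_mul, mul_comm]
  have h24 : (2 : ℝ) ^ α ≤ 4 ^ α := rpow_le_rpow zero_le_two (by norm_num) hα
  rw [radialProfile_eq (by positivity), radialProfile_eq (by positivity), le_sub_iff_add_le,
    hscale 4 (by norm_num), hscale 2 (by norm_num)]
  calc _ ≤ (α⁻¹ * (4 ^ α - 2 ^ α) * r ^ (-α) + α⁻¹ * (1 + 2 ^ α * r ^ (-α))) ^ k :=
        pow_add_pow_le (by have := sub_nonneg.2 h24; positivity) (by positivity) hk
    _ = (α⁻¹ * (1 + 4 ^ α * r ^ (-α))) ^ k := by ring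

theorem tendsto_radialProfile_div_four_sub_div_two (hα : 0 < α) (hk : k ≠ 0) :
    Tendsto (fun r => radialProfile α k (r / 4) - radialProfile α k (r / 2)) (𝓝[>] 0)
      atTop := by
  have hc : 0 < α⁻¹ * (4 ^ α - 2 ^ α) :=
    mul_pos (inv_pos.2 hα) (sub_pos.2 (rpow_lt_rpow zero_le_two (by norm_num) hα))
  refine tendsto_atTop_mono' _ ?_ ((tendsto_pow_atTop hk).comp
    ((tendsto_rpow_neg_nhdsGT_zero (neg_lt_zero.2 hα)).const_mul_atTop hc))
  filter_upwards [self_mem_nhdsWithin] with r hr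
  exact pow_le_radialProfile_div_four_sub hα.le hk hr

end RadialProfile

section RadialIntegrability

variable {E : Type*} [NormedAddCommGroup E] [NormedSpace ℝ E] [FiniteDimensional ℝ E]
  [Nontrivial E] [MeasurableSpace E] [BorelSpace E] {μ : Measure E} [μ.IsAddHaarMeasure]
  {f : E → ℝ} {α : ℝ} {k : ℕ}

theorem integrableOn_ball_one_of_eq_radialProfile (hα : 0 < α) (hk : α * k < finrank ℝ E)
    (hf : ∀ x ≠ 0, f x = radialProfile α k ‖x‖) : IntegrableOn f (ball 0 1) μ := by
  have hae : (fun x => radialProfile α k ‖x‖) =ᵐ[μ] f := by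
    filter_upwards [μ.ae_ne 0] with x hx
    exact (hf x hx).symm
  refine integrableOn_ball_of_norm_le_rpow (C := (2 / α) ^ k) finrank_pos hk ?_
    ((by unfold radialProfile; fun_prop : Measurable fun x : E => radialProfile α k ‖x‖)
      |>.aestronglyMeasurable.congr hae)
  filter_upwards [ae_restrict_mem measurableSet_ball, ae_restrict_of_ae (μ.ae_ne 0)] with x hx hx0
  rw [hf x hx0, Real.norm_of_nonneg (radialProfile_nonneg hα.le (norm_nonneg x))]
  exact radialProfile_le hα (norm_pos_iff.2 hx0) (mem_ball_zero_iff.1 hx).le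

end RadialIntegrability

/-- Let `n ≥ 2` and `α > 0` with `α·(n-1) < n`, and let
`Q(x) = ((1 + |x|^α)/(α·|x|^α))^{n-1}` for `x ≠ 0`. Then `Q` is locally
integrable near `0` (integrable on some ball around `0`), but `Q` does not
have finite mean oscillation at `0`: the limsup, as `ε → 0⁺`, of the mean
oscillation of `Q` over the balls `B(0, ε)` is infinite. -/
theorem Q_integrable_not_FMO (n : ℕ) (hn : 2 ≤ n) (α : ℝ) (hα : 0 < α)
    (hαn : α * ((n : ℝ) - 1) < n)
    (Q : EuclideanSpace ℝ (Fin n) → ℝ)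
    (hQ : ∀ x : EuclideanSpace ℝ (Fin n), x ≠ 0 →
      Q x = ((1 + ‖x‖ ^ α) / (α * ‖x‖ ^ α)) ^ (n - 1)) :
    (∃ ε : ℝ, 0 < ε ∧
      IntegrableOn Q (Metric.ball (0 : EuclideanSpace ℝ (Fin n)) ε) volume) ∧
    Filter.limsup (fun ε : ℝ =>
      ENNReal.ofReal
        ((volume (Metric.ball (0 : EuclideanSpace ℝ (Fin n)) ε)).toReal⁻¹ *
          ∫ x in Metric.ball (0 : EuclideanSpace ℝ (Fin n)) ε,
            |Q x - (volume (Metric.ball (0 : EuclideanSpace ℝ (Fin n)) ε)).toReal⁻¹ *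
              ∫ y in Metric.ball (0 : EuclideanSpace ℝ (Fin n)) ε, Q y|))
      (nhdsWithin (0 : ℝ) (Set.Ioi 0)) = ⊤ := by
  have : Nontrivial (EuclideanSpace ℝ (Fin n)) :=
    Module.nontrivial_of_finrank_pos (R := ℝ) (by rw [finrank_euclideanSpace_fin]; omega)
  have hk : α * ((n - 1 : ℕ) : ℝ) < finrank ℝ (EuclideanSpace ℝ (Fin n)) := by
    rwa [finrank_euclideanSpace_fin, Nat.cast_sub (by omega), Nat.cast_one]
  have hQint : IntegrableOn Q (ball 0 1) volume :=
    integrableOn_ball_one_of_eq_radialProfile hα hk hQ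
  refine ⟨⟨1, one_pos, hQint⟩, ?_⟩
  change limsup (fun ε => ENNReal.ofReal (meanOscillation volume Q (ball 0 ε))) (𝓝[>] 0) = ⊤
  have hosc : Tendsto (fun ε => meanOscillation volume Q (ball 0 ε)) (𝓝[>] 0) atTop := by
    have hgap := tendsto_radialProfile_div_four_sub_div_two hα (by omega : n - 1 ≠ 0)
    refine tendsto_atTop_mono' _ ?_ (hgap.atTop_div_const
      (by positivity : (0 : ℝ) < 2 * 4 ^ finrank ℝ (EuclideanSpace ℝ (Fin n))))
    filter_upwards [Ioc_mem_nhdsGT one_pos] with ε ⟨hε, hε1⟩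
    exact sub_div_le_meanOscillation_ball_of_antitoneOn (antitoneOn_radialProfile hα.le) hQ
      (hQint.mono_set (ball_subset_ball hε1)) hε
  exact (ENNReal.tendsto_ofReal_atTop.comp hosc).limsup_eq
end
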